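/- arXiv:2002.08576 — 5 statements merged into one kernel-verified Lean document; each statement's English description precedes it below -/
import Mathlib

section
/- Let l be any line of PG(3,q). Then the number of tangent planes of PG(3,q) containing l is equal to the number of black points lying on l. -/
/-!
Double count incidences along a line `l`. A line `m` of `S` shares with `l` exactly as many
points as there are planes containing both (`q + 1`, `1` or `0` according as `m = l`, `m` meets
`l`, or `m` is skew to `l`), so summing over `m ∈ S` gives
`∑_{p ∈ l} |S_p| = ∑_{π ⊇ l} |S_π|`. Both sides have `q + 1` terms, each equal to `q(q+1)/2` or
`q²` by (P1) and (P2); since these two values differ, the sides have equally many terms `q²`.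
-/

open Submodule Set

/-- The points of `PG(3,q)`: the 1-dimensional subspaces of a 4-dimensional
vector space over the field `K` of order `q`. -/
def pgPoint (K : Type) [Field K] : Set (Submodule K (Fin 4 → K)) :=
  {W | Module.finrank K ↥W = 1}

/-- The lines of `PG(3,q)`: the 2-dimensional subspaces. -/
def pgLine (K : Type) [Field K] : Set (Submodule K (Fin 4 → K)) :=
  {W | Module.finrank K ↥W = 2}

/-- The planes of `PG(3,q)`: the 3-dimensional subspaces. -/
def pgPlane (K : Type) [Field K] : Set (Submodule K (Fin 4 → K)) :=
  {W | Module.finrank K ↥W = 3}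

/-- The lines of the family `S` passing through the point `p`. -/
def linesThru (K : Type) [Field K] (S : Set (Submodule K (Fin 4 → K)))
    (p : Submodule K (Fin 4 → K)) : Set (Submodule K (Fin 4 → K)) :=
  {l | l ∈ S ∧ p ≤ l}

/-- The lines of the family `S` contained in the plane `π` (the set `S_π`). -/
def linesIn (K : Type) [Field K] (S : Set (Submodule K (Fin 4 → K)))
    (π : Submodule K (Fin 4 → K)) : Set (Submodule K (Fin 4 → K)) :=
  {l | l ∈ S ∧ l ≤ π}

/-- The lines of `S_π` belonging to the pencil of lines of the plane `π`
through the point `p`. -/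
def pencilS (K : Type) [Field K] (S : Set (Submodule K (Fin 4 → K)))
    (p π : Submodule K (Fin 4 → K)) : Set (Submodule K (Fin 4 → K)) :=
  {l | l ∈ S ∧ p ≤ l ∧ l ≤ π}

/-- Property (P1): every point lies on exactly `q(q+1)/2` or exactly `q^2`
lines of `S`, and both numbers are attained. -/
def P1 (K : Type) [Field K] (S : Set (Submodule K (Fin 4 → K))) (q : ℕ) : Prop :=
  (∀ p ∈ pgPoint K, (linesThru K S p).ncard = q * (q + 1) / 2 ∨
      (linesThru K S p).ncard = q ^ 2) ∧
  (∃ p ∈ pgPoint K, (linesThru K S p).ncard = q * (q + 1) / 2) ∧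
  (∃ p ∈ pgPoint K, (linesThru K S p).ncard = q ^ 2)

/-- Property (P2): every plane contains exactly `q(q+1)/2` or exactly `q^2`
lines of `S`. -/
def P2 (K : Type) [Field K] (S : Set (Submodule K (Fin 4 → K))) (q : ℕ) : Prop :=
  ∀ π ∈ pgPlane K, (linesIn K S π).ncard = q * (q + 1) / 2 ∨
    (linesIn K S π).ncard = q ^ 2

/-- Property (P2a): if a plane contains `q^2` lines of `S`, then every pencil of
lines in that plane contains `0` or `q` lines of `S`. -/
def P2a (K : Type) [Field K] (S : Set (Submodule K (Fin 4 → K))) (q : ℕ) : Prop :=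
  ∀ π ∈ pgPlane K, (linesIn K S π).ncard = q ^ 2 →
    ∀ p ∈ pgPoint K, p ≤ π →
      (pencilS K S p π).ncard = 0 ∨ (pencilS K S p π).ncard = q

/-- Property (P2b): if a plane contains `q(q+1)/2` lines of `S`, then every
pencil of lines in that plane contains `(q-1)/2`, `(q+1)/2` or `q` lines of `S`. -/
def P2b (K : Type) [Field K] (S : Set (Submodule K (Fin 4 → K))) (q : ℕ) : Prop :=
  ∀ π ∈ pgPlane K, (linesIn K S π).ncard = q * (q + 1) / 2 →
    ∀ p ∈ pgPoint K, p ≤ π →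
      (pencilS K S p π).ncard = (q - 1) / 2 ∨
      (pencilS K S p π).ncard = (q + 1) / 2 ∨
      (pencilS K S p π).ncard = q

/-- A point is black if it lies on exactly `q^2` lines of `S`. -/
def IsBlack (K : Type) [Field K] (S : Set (Submodule K (Fin 4 → K))) (q : ℕ)
    (p : Submodule K (Fin 4 → K)) : Prop :=
  p ∈ pgPoint K ∧ (linesThru K S p).ncard = q ^ 2

/-- A plane is tangent if it contains exactly `q^2` lines of `S`. -/
def IsTangent (K : Type) [Field K] (S : Set (Submodule K (Fin 4 → K))) (q : ℕ)
    (π : Submodule K (Fin 4 → K)) : Prop :=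
  π ∈ pgPlane K ∧ (linesIn K S π).ncard = q ^ 2

/-- A plane is secant if it contains exactly `q(q+1)/2` lines of `S`. -/
def IsSecant (K : Type) [Field K] (S : Set (Submodule K (Fin 4 → K))) (q : ℕ)
    (π : Submodule K (Fin 4 → K)) : Prop :=
  π ∈ pgPlane K ∧ (linesIn K S π).ncard = q * (q + 1) / 2

/-- For a secant plane `π`, the set `α(π)` of points of `π` lying on exactly
`(q-1)/2` lines of `S_π`. -/
def alphaSet (K : Type) [Field K] (S : Set (Submodule K (Fin 4 → K))) (q : ℕ)
    (π : Submodule K (Fin 4 → K)) : Set (Submodule K (Fin 4 → K)) :=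
  {p | p ∈ pgPoint K ∧ p ≤ π ∧ (pencilS K S p π).ncard = (q - 1) / 2}

/-- For a secant plane `π`, the set `β(π)` of points of `π` lying on exactly
`(q+1)/2` lines of `S_π`. -/
def betaSet (K : Type) [Field K] (S : Set (Submodule K (Fin 4 → K))) (q : ℕ)
    (π : Submodule K (Fin 4 → K)) : Set (Submodule K (Fin 4 → K)) :=
  {p | p ∈ pgPoint K ∧ p ≤ π ∧ (pencilS K S p π).ncard = (q + 1) / 2}

/-- For a secant plane `π`, the set `γ(π)` of points of `π` lying on exactly
`q` lines of `S_π`. -/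
def gammaSet (K : Type) [Field K] (S : Set (Submodule K (Fin 4 → K))) (q : ℕ)
    (π : Submodule K (Fin 4 → K)) : Set (Submodule K (Fin 4 → K)) :=
  {p | p ∈ pgPoint K ∧ p ≤ π ∧ (pencilS K S p π).ncard = q}

open Module Finset

section SubspaceCounting

variable {K V : Type*} [Field K] [AddCommGroup V] [Module K V]

theorem ncard_setOf_finrank_eq_one [Finite K] (hV : finrank K V = 2) :
    {H : Submodule K V | finrank K H = 1}.ncard = Nat.card K + 1 := by
  rw [← Projectivization.card_of_finrank_two K V hV,
    Nat.card_congr (Projectivization.equivSubmodule K V)]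
  exact (Nat.card_coe_set_eq _).symm

theorem ncard_setOf_finrank_eq_one_le [Finite K] (W : Submodule K V) (hW : finrank K W = 2) :
    {p : Submodule K V | finrank K p = 1 ∧ p ≤ W}.ncard = Nat.card K + 1 := by
  have hpoints : {p : Submodule K V | finrank K p = 1 ∧ p ≤ W} =
      map W.subtype '' {H : Submodule K W | finrank K H = 1} := by
    ext p
    constructor
    · rintro ⟨hp, hpW⟩
      have hmap : map W.subtype (comap W.subtype p) = p := by
        rw [map_comap_subtype, inf_of_le_right hpW]
      refine ⟨comap W.subtype p, ?_, hmap⟩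
      show finrank K (comap W.subtype p) = 1
      rw [← finrank_map_subtype_eq, hmap, hp]
    · rintro ⟨H, hH, rfl⟩
      exact ⟨(finrank_map_subtype_eq W H).trans hH, map_subtype_le W H⟩
  rw [hpoints, Set.ncard_image_of_injective _ (map_injective_of_injective W.injective_subtype),
    ncard_setOf_finrank_eq_one hW]

variable [FiniteDimensional K V]

theorem finrank_comap_mkQ (l : Submodule K V) (P : Submodule K (V ⧸ l)) :
    finrank K (P.comap l.mkQ) = finrank K P + finrank K l := by
  set f := l.mkQ ∘ₗ (P.comap l.mkQ).subtype
  have hrange : LinearMap.range f = P := by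
    rw [LinearMap.range_comp, range_subtype, map_comap_eq_of_surjective l.mkQ_surjective]
  have hker : LinearMap.ker f = l.comap (P.comap l.mkQ).subtype := by
    rw [LinearMap.ker_comp, ker_mkQ]
  have hl : finrank K (l.comap (P.comap l.mkQ).subtype) = finrank K l :=
    (comapSubtypeEquivOfLe (le_comap_mkQ l P)).finrank_eq
  have := f.finrank_range_add_finrank_ker
  rw [hrange, hker, hl] at this
  exact this.symm

theorem ncard_setOf_finrank_eq_succ_ge [Finite K] (l : Submodule K V)
    (hl : finrank K V = finrank K l + 2) :
    {π : Submodule K V | finrank K π = finrank K l + 1 ∧ l ≤ π}.ncard = Nat.card K + 1 := by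
  have hquot : finrank K (V ⧸ l) = 2 := by
    have := l.finrank_quotient_add_finrank
    omega
  have hplanes : {π : Submodule K V | finrank K π = finrank K l + 1 ∧ l ≤ π} =
      comap l.mkQ '' {P : Submodule K (V ⧸ l) | finrank K P = 1} := by
    ext π
    constructor
    · rintro ⟨hπ, hlπ⟩
      have hcomap : comap l.mkQ (map l.mkQ π) = π := by rw [comap_map_mkQ, sup_eq_right.2 hlπ]
      refine ⟨map l.mkQ π, ?_, hcomap⟩
      have := finrank_comap_mkQ l (map l.mkQ π)
      rw [hcomap] at this
      show finrank K (map l.mkQ π) = 1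
      omega
    · rintro ⟨P, hP, rfl⟩
      exact ⟨by rw [finrank_comap_mkQ, hP, add_comm], le_comap_mkQ l P⟩
  rw [hplanes, Set.ncard_image_of_injective _ (comap_injective_of_surjective l.mkQ_surjective),
    ncard_setOf_finrank_eq_one hquot]

theorem ncard_setOf_finrank_eq_le_of_finrank_lt {U : Submodule K V} {n : ℕ}
    (h : finrank K U < n) : {p : Submodule K V | finrank K p = n ∧ p ≤ U}.ncard = 0 := by
  convert Set.ncard_empty (Submodule K V)
  refine Set.eq_empty_of_forall_notMem ?_
  rintro p ⟨rfl, hpU⟩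
  exact absurd (finrank_mono hpU) h.not_ge

theorem ncard_setOf_finrank_eq_ge_of_lt_finrank {U : Submodule K V} {n : ℕ}
    (h : n < finrank K U) : {π : Submodule K V | finrank K π = n ∧ U ≤ π}.ncard = 0 := by
  convert Set.ncard_empty (Submodule K V)
  refine Set.eq_empty_of_forall_notMem ?_
  rintro π ⟨rfl, hUπ⟩
  exact absurd (finrank_mono hUπ) h.not_ge

theorem ncard_setOf_finrank_eq_le_of_finrank_eq {U : Submodule K V} {n : ℕ}
    (h : finrank K U = n) : {p : Submodule K V | finrank K p = n ∧ p ≤ U}.ncard = 1 := by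
  rw [Set.ncard_eq_one]
  refine ⟨U, Set.eq_singleton_iff_unique_mem.2 ⟨⟨h, le_rfl⟩, ?_⟩⟩
  rintro p ⟨hp, hpU⟩
  exact eq_of_le_of_finrank_eq hpU (hp.trans h.symm)

theorem ncard_setOf_finrank_eq_ge_of_finrank_eq {U : Submodule K V} {n : ℕ}
    (h : finrank K U = n) : {π : Submodule K V | finrank K π = n ∧ U ≤ π}.ncard = 1 := by
  rw [Set.ncard_eq_one]
  refine ⟨U, Set.eq_singleton_iff_unique_mem.2 ⟨⟨h, le_rfl⟩, ?_⟩⟩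
  rintro π ⟨hπ, hUπ⟩
  exact (eq_of_le_of_finrank_eq hUπ (h.trans hπ.symm)).symm

theorem ncard_points_le_inf_eq_ncard_planes_ge_sup [Finite K]
    (hV : finrank K V = 4) {l m : Submodule K V} (hl : finrank K l = 2) (hm : finrank K m = 2) :
    {p : Submodule K V | finrank K p = 1 ∧ p ≤ l ⊓ m}.ncard =
      {π : Submodule K V | finrank K π = 3 ∧ l ⊔ m ≤ π}.ncard := by
  have hdim := finrank_sup_add_finrank_inf_eq l m
  have hsup : finrank K ↥(l ⊔ m) ≤ 4 := hV ▸ (l ⊔ m).finrank_le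
  have hinf : finrank K ↥(l ⊓ m) ≤ 2 := hl ▸ finrank_mono inf_le_left
  obtain h | h | h :
      finrank K ↥(l ⊓ m) = 0 ∨ finrank K ↥(l ⊓ m) = 1 ∨ finrank K ↥(l ⊓ m) = 2 := by
    omega
  · rw [ncard_setOf_finrank_eq_le_of_finrank_lt (by omega),
      ncard_setOf_finrank_eq_ge_of_lt_finrank (by omega)]
  · rw [ncard_setOf_finrank_eq_le_of_finrank_eq h,
      ncard_setOf_finrank_eq_ge_of_finrank_eq (by omega)]
  · rw [ncard_setOf_finrank_eq_one_le _ h, show 3 = finrank K ↥(l ⊔ m) + 1 by omega,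
      ncard_setOf_finrank_eq_succ_ge (l ⊔ m) (by omega)]

end SubspaceCounting

namespace Finset

variable {α β γ : Type*}

theorem sum_card_filter_eq_sum_card_filter_of_card_filter_eq {P : Finset α} {L : Finset β}
    {E : Finset γ} (r : α → β → Prop) (s : β → γ → Prop) [∀ a b, Decidable (r a b)]
    [∀ b c, Decidable (s b c)] (h : ∀ m ∈ L, #{p ∈ P | r p m} = #{π ∈ E | s m π}) :
    ∑ p ∈ P, #{m ∈ L | r p m} = ∑ π ∈ E, #{m ∈ L | s m π} :=
  calc ∑ p ∈ P, #{m ∈ L | r p m} = ∑ m ∈ L, #{p ∈ P | r p m} :=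
        sum_card_bipartiteAbove_eq_sum_card_bipartiteBelow r
    _ = ∑ m ∈ L, #{π ∈ E | s m π} := sum_congr rfl h
    _ = ∑ π ∈ E, #{m ∈ L | s m π} := sum_card_bipartiteAbove_eq_sum_card_bipartiteBelow s

theorem natCast_sum_of_forall_eq_or_eq {s : Finset α} {f : α → ℕ} {a b : ℕ}
    (hf : ∀ x ∈ s, f x = a ∨ f x = b) :
    ((∑ x ∈ s, f x : ℕ) : ℤ) = #s * a + #{x ∈ s | f x = b} * ((b : ℤ) - a) := by
  have hpoint : ∀ x ∈ s, (f x : ℤ) = a + if f x = b then (b : ℤ) - a else 0 := by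
    intro x hx
    rcases hf x hx with h | h <;> split_ifs <;> omega
  rw [Nat.cast_sum, sum_congr rfl hpoint, sum_add_distrib, sum_const, ← sum_filter, sum_const,
    nsmul_eq_mul, nsmul_eq_mul]

theorem card_filter_eq_of_sum_eq_of_forall_eq_or_eq {s : Finset α} {t : Finset β} {f : α → ℕ}
    {g : β → ℕ} {a b : ℕ} (hab : a ≠ b) (hst : #s = #t) (hf : ∀ x ∈ s, f x = a ∨ f x = b)
    (hg : ∀ y ∈ t, g y = a ∨ g y = b) (hsum : ∑ x ∈ s, f x = ∑ y ∈ t, g y) :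
    #{x ∈ s | f x = b} = #{y ∈ t | g y = b} := by
  have hcast := congrArg (fun n : ℕ => (n : ℤ)) hsum
  simp only [natCast_sum_of_forall_eq_or_eq hf, natCast_sum_of_forall_eq_or_eq hg, hst] at hcast
  have hba : (b : ℤ) - a ≠ 0 := sub_ne_zero.2 (by exact_mod_cast hab.symm)
  exact_mod_cast mul_right_cancel₀ hba (add_left_cancel hcast)

end Finset

theorem Nat.mul_succ_div_two_lt_sq {q : ℕ} (hq : 1 < q) : q * (q + 1) / 2 < q ^ 2 := by
  rw [Nat.div_lt_iff_lt_mul two_pos]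
  nlinarith

section ProjectiveSpace

open scoped Classical

variable {K : Type} [Field K] [Fintype K]

noncomputable def pointsOn (l : Submodule K (Fin 4 → K)) : Finset (Submodule K (Fin 4 → K)) :=
  {p | p ∈ pgPoint K ∧ p ≤ l}

noncomputable def planesThrough (l : Submodule K (Fin 4 → K)) :
    Finset (Submodule K (Fin 4 → K)) :=
  {π | π ∈ pgPlane K ∧ l ≤ π}

@[simp]
theorem mem_pointsOn {l p : Submodule K (Fin 4 → K)} :
    p ∈ pointsOn l ↔ p ∈ pgPoint K ∧ p ≤ l := by
  simp [pointsOn]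

@[simp]
theorem mem_planesThrough {l π : Submodule K (Fin 4 → K)} :
    π ∈ planesThrough l ↔ π ∈ pgPlane K ∧ l ≤ π := by
  simp [planesThrough]

theorem card_pointsOn {l : Submodule K (Fin 4 → K)} (hl : l ∈ pgLine K) :
    #(pointsOn l) = Fintype.card K + 1 := by
  rw [← Set.ncard_coe_finset, pointsOn, coe_filter_univ, ← Nat.card_eq_fintype_card]
  exact ncard_setOf_finrank_eq_one_le l hl

theorem card_planesThrough {l : Submodule K (Fin 4 → K)} (hl : l ∈ pgLine K) :
    #(planesThrough l) = Fintype.card K + 1 := by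
  have hl : finrank K l = 2 := hl
  have := ncard_setOf_finrank_eq_succ_ge l (by rw [finrank_fin_fun, hl])
  rw [hl, Nat.card_eq_fintype_card] at this
  rw [← Set.ncard_coe_finset, planesThrough, coe_filter_univ]
  exact this

theorem card_filter_pointsOn_eq_card_filter_planesThrough {l m : Submodule K (Fin 4 → K)}
    (hl : l ∈ pgLine K) (hm : m ∈ pgLine K) :
    #{p ∈ pointsOn l | p ≤ m} = #{π ∈ planesThrough l | m ≤ π} := by
  rw [← Set.ncard_coe_finset, ← Set.ncard_coe_finset, pointsOn, planesThrough, filter_filter,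
    filter_filter, coe_filter_univ, coe_filter_univ]
  convert ncard_points_le_inf_eq_ncard_planes_ge_sup (finrank_fin_fun K) hl hm using 3 <;>
    simp only [le_inf_iff, sup_le_iff, and_assoc] <;> rfl

theorem sum_ncard_linesThru_eq_sum_ncard_linesIn {S : Set (Submodule K (Fin 4 → K))}
    (hS : S ⊆ pgLine K) {l : Submodule K (Fin 4 → K)} (hl : l ∈ pgLine K) :
    ∑ p ∈ pointsOn l, (linesThru K S p).ncard =
      ∑ π ∈ planesThrough l, (linesIn K S π).ncard := by
  set L : Finset (Submodule K (Fin 4 → K)) := {m | m ∈ S}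
  have hthru : ∀ p, (linesThru K S p).ncard = #{m ∈ L | p ≤ m} := by
    intro p
    rw [← Set.ncard_coe_finset]
    congr 1
    ext m
    simp [L, linesThru]
  have hin : ∀ π, (linesIn K S π).ncard = #{m ∈ L | m ≤ π} := by
    intro π
    rw [← Set.ncard_coe_finset]
    congr 1
    ext m
    simp [L, linesIn]
  simp only [hthru, hin]
  exact sum_card_filter_eq_sum_card_filter_of_card_filter_eq _ _ fun m hm =>
    card_filter_pointsOn_eq_card_filter_planesThrough hl (hS (by simpa [L] using hm))

theorem ncard_setOf_isTangent_ge {S : Set (Submodule K (Fin 4 → K))} {q : ℕ}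
    (l : Submodule K (Fin 4 → K)) :
    {π | IsTangent K S q π ∧ l ≤ π}.ncard =
      #{π ∈ planesThrough l | (linesIn K S π).ncard = q ^ 2} := by
  rw [← Set.ncard_coe_finset]
  congr 1
  ext π
  simp only [IsTangent, Set.mem_ofPred_eq, coe_filter, mem_planesThrough]
  tauto

theorem ncard_setOf_isBlack_le {S : Set (Submodule K (Fin 4 → K))} {q : ℕ}
    (l : Submodule K (Fin 4 → K)) :
    {p | IsBlack K S q p ∧ p ≤ l}.ncard =
      #{p ∈ pointsOn l | (linesThru K S p).ncard = q ^ 2} := by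
  rw [← Set.ncard_coe_finset]
  congr 1
  ext p
  simp only [IsBlack, Set.mem_ofPred_eq, coe_filter, mem_pointsOn]
  tauto

end ProjectiveSpace

theorem stmt_0_general (K : Type) [Field K] [Fintype K] (q : ℕ) (hq : Fintype.card K = q)
    (S : Set (Submodule K (Fin 4 → K))) (hS : S ⊆ pgLine K)
    (h1 : P1 K S q) (h2 : P2 K S q) :
    ∀ l ∈ pgLine K,
      {π | IsTangent K S q π ∧ l ≤ π}.ncard =
        {p | IsBlack K S q p ∧ p ≤ l}.ncard := by
  intro l hl
  have hcard : #(planesThrough l) = #(pointsOn l) := by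
    rw [card_planesThrough hl, card_pointsOn hl]
  rw [ncard_setOf_isTangent_ge, ncard_setOf_isBlack_le]
  refine card_filter_eq_of_sum_eq_of_forall_eq_or_eq
    (Nat.mul_succ_div_two_lt_sq (hq ▸ Fintype.one_lt_card)).ne hcard
    (fun π hπ => h2 π (mem_planesThrough.1 hπ).1) (fun p hp => h1.1 p (mem_pointsOn.1 hp).1)
    (sum_ncard_linesThru_eq_sum_ncard_linesIn hS hl).symm

/-- For any line `l` of `PG(3,q)`, the number of tangent planes
containing `l` equals the number of black points lying on `l`. -/
theorem stmt_0 (K : Type) [Field K] [Fintype K] (q : ℕ) (hq : Fintype.card K = q)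
    (hq_odd : Odd q) (S : Set (Submodule K (Fin 4 → K))) (hS : S ⊆ pgLine K)
    (h1 : P1 K S q) (h2 : P2 K S q) (h2a : P2a K S q) (h2b : P2b K S q) :
    ∀ l ∈ pgLine K,
      {π | IsTangent K S q π ∧ l ≤ π}.ncard =
        {p | IsBlack K S q p ∧ p ≤ l}.ncard :=
  stmt_0_general K q hq S hS h1 h2
end

section
/- Let π be a tangent plane. Then exactly q^2+q points of π lie on exactly q lines of S_π; equivalently, there is exactly one point of π (called the pole p_π of π) which lies on no line of S_π. -/
open Submodule Set

/-! Every line of `S_π` has `q + 1` points, so counting incidences in a tangent plane `π` gives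
`∑_{p ∈ π} |pencil of p| = q²(q + 1)`. By (P2a) every pencil has `0` or `q` lines, hence exactly
`q(q + 1)` of the `q² + q + 1` points of `π` have a full pencil and a single point has an empty
one. -/

open Module Submodule Finset

theorem ncard_finrank_one_le_eq_sum {K V : Type*} [Field K] [Finite K] [AddCommGroup V]
    [Module K V] (W : Submodule K V) {d : ℕ} (hW : finrank K W = d) :
    {p : Submodule K V | finrank K p = 1 ∧ p ≤ W}.ncard =
      ∑ i ∈ range d, Nat.card K ^ i := by
  have himage : {p : Submodule K V | finrank K p = 1 ∧ p ≤ W} =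
      map W.subtype '' {H : Submodule K W | finrank K H = 1} := by
    ext p
    constructor
    · rintro ⟨hp, hpW⟩
      have hmap : map W.subtype (comap W.subtype p) = p := by
        rw [map_comap_subtype, inf_eq_right.mpr hpW]
      refine ⟨comap W.subtype p, ?_, hmap⟩
      show finrank K _ = 1
      rw [← finrank_map_subtype_eq, hmap, hp]
    · rintro ⟨H, hH, rfl⟩
      exact ⟨(finrank_map_subtype_eq W H).trans hH, map_subtype_le W H⟩
  rw [himage, Set.ncard_image_of_injective _ (map_injective_of_injective W.injective_subtype),
    ← Projectivization.card_of_finrank K W hW,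
    Nat.card_congr (Projectivization.equivSubmodule K W), ← Nat.card_coe_set_eq]
  rfl

theorem Finset.sum_eq_card_filter_mul_of_forall_eq_zero_or_eq {α : Type*} {s : Finset α}
    {f : α → ℕ} {c : ℕ} (h : ∀ x ∈ s, f x = 0 ∨ f x = c) :
    ∑ x ∈ s, f x = #{x ∈ s | f x = c} * c := by
  rw [← sum_filter_add_sum_filter_not s (f · = c), sum_congr rfl fun x hx => (mem_filter.1 hx).2,
    sum_const, smul_eq_mul, sum_eq_zero, add_zero]
  intro x hx
  obtain ⟨hxs, hxc⟩ := mem_filter.1 hx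
  exact (h x hxs).resolve_right hxc

section PlaneCounting

variable {K : Type} [Field K] [Fintype K]

noncomputable def pointsIn (π : Submodule K (Fin 4 → K)) : Finset (Submodule K (Fin 4 → K)) :=
  (Set.toFinite {p | p ∈ pgPoint K ∧ p ≤ π}).toFinset

@[simp]
theorem mem_pointsIn {π p : Submodule K (Fin 4 → K)} :
    p ∈ pointsIn π ↔ p ∈ pgPoint K ∧ p ≤ π :=
  Set.Finite.mem_toFinset _

theorem card_pointsIn {π : Submodule K (Fin 4 → K)} {d : ℕ} (hπ : finrank K π = d) :
    #(pointsIn π) = ∑ i ∈ range d, Fintype.card K ^ i := by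
  rw [pointsIn, ← Set.ncard_eq_toFinset_card, ← Nat.card_eq_fintype_card]
  exact ncard_finrank_one_le_eq_sum π hπ

theorem sum_ncard_pencilS_eq {S : Set (Submodule K (Fin 4 → K))} (hS : S ⊆ pgLine K)
    (π : Submodule K (Fin 4 → K)) :
    ∑ p ∈ pointsIn π, (pencilS K S p π).ncard =
      (linesIn K S π).ncard * (Fintype.card K + 1) := by
  classical
  set L := (Set.toFinite (linesIn K S π)).toFinset
  have hpencil : ∀ p, (pencilS K S p π).ncard = #(L.bipartiteAbove (· ≤ ·) p) := by
    intro p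
    rw [← Set.ncard_coe_finset, coe_bipartiteAbove]
    congr 1
    ext l
    simp only [pencilS, linesIn, L, Set.Finite.mem_toFinset, Set.mem_ofPred_eq]
    tauto
  have hline : ∀ l ∈ L, #((pointsIn π).bipartiteBelow (· ≤ ·) l) = Fintype.card K + 1 := by
    intro l hl
    obtain ⟨hlS, hlπ⟩ : l ∈ linesIn K S π := (Set.Finite.mem_toFinset _).1 hl
    have hpoints : (pointsIn π).bipartiteBelow (· ≤ ·) l = pointsIn l := by
      ext p
      simp only [mem_bipartiteBelow, mem_pointsIn]
      exact ⟨fun ⟨⟨hp, _⟩, hpl⟩ => ⟨hp, hpl⟩, fun ⟨hp, hpl⟩ => ⟨⟨hp, hpl.trans hlπ⟩, hpl⟩⟩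
    rw [hpoints, card_pointsIn (hS hlS)]
    simp [sum_range_succ, add_comm]
  rw [sum_congr rfl fun p _ => hpencil p, sum_card_bipartiteAbove_eq_sum_card_bipartiteBelow,
    sum_congr rfl hline, sum_const, smul_eq_mul, ← Set.ncard_eq_toFinset_card]

theorem card_filter_pencilS_of_isTangent {S : Set (Submodule K (Fin 4 → K))} (hS : S ⊆ pgLine K)
    {π : Submodule K (Fin 4 → K)} (hπ : IsTangent K S (Fintype.card K) π)
    (hpencil : ∀ p ∈ pointsIn π,
      (pencilS K S p π).ncard = 0 ∨ (pencilS K S p π).ncard = Fintype.card K) :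
    #{p ∈ pointsIn π | (pencilS K S p π).ncard = Fintype.card K} =
        Fintype.card K ^ 2 + Fintype.card K ∧
      #{p ∈ pointsIn π | (pencilS K S p π).ncard = 0} = 1 := by
  set q := Fintype.card K with hq_def
  have hq : 0 < q := Fintype.card_pos
  have hsum := sum_ncard_pencilS_eq hS π
  rw [Finset.sum_eq_card_filter_mul_of_forall_eq_zero_or_eq hpencil, hπ.2] at hsum
  have hfull : #{p ∈ pointsIn π | (pencilS K S p π).ncard = q} = q ^ 2 + q :=
    Nat.eq_of_mul_eq_mul_right hq (hsum.trans (by ring))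
  refine ⟨hfull, ?_⟩
  have hsplit :=
    card_filter_add_card_filter_not (s := pointsIn π) fun p => (pencilS K S p π).ncard = 0
  have hcompl : {p ∈ pointsIn π | ¬(pencilS K S p π).ncard = 0} =
      {p ∈ pointsIn π | (pencilS K S p π).ncard = q} :=
    filter_congr fun p hp => by rcases hpencil p hp with h | h <;> omega
  rw [hcompl, hfull, card_pointsIn hπ.1] at hsplit
  simp only [sum_range_succ, range_zero, sum_empty, pow_zero, pow_one, ← hq_def] at hsplit
  omega

end PlaneCounting

theorem stmt_4_general (K : Type) [Field K] [Fintype K] (q : ℕ) (hq : Fintype.card K = q)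
    (S : Set (Submodule K (Fin 4 → K))) (hS : S ⊆ pgLine K)
    (h2a : P2a K S q) :
    ∀ π, IsTangent K S q π →
      {p | p ∈ pgPoint K ∧ p ≤ π ∧ (pencilS K S p π).ncard = q}.ncard = q ^ 2 + q ∧
      (∃! p, p ∈ pgPoint K ∧ p ≤ π ∧ (pencilS K S p π).ncard = 0) := by
  intro π hπ
  subst hq
  have hpencil : ∀ p ∈ pointsIn π,
      (pencilS K S p π).ncard = 0 ∨ (pencilS K S p π).ncard = Fintype.card K := fun p hp =>
    h2a π hπ.1 hπ.2 p (mem_pointsIn.1 hp).1 (mem_pointsIn.1 hp).2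
  obtain ⟨hfull, hpole⟩ := card_filter_pencilS_of_isTangent hS hπ hpencil
  have hcoe : ∀ n, {p | p ∈ pgPoint K ∧ p ≤ π ∧ (pencilS K S p π).ncard = n} =
      ↑{p ∈ pointsIn π | (pencilS K S p π).ncard = n} := fun n => by
    ext p
    simp [and_assoc]
  refine ⟨by rw [hcoe, Set.ncard_coe_finset, hfull], ?_⟩
  obtain ⟨a, ha⟩ := card_eq_one.1 hpole
  have hsingleton := hcoe 0
  rw [ha, coe_singleton] at hsingleton
  exact ⟨a, hsingleton.symm.subset rfl, fun p hp => hsingleton.subset hp⟩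

/-- In a tangent plane `π`, exactly `q^2+q` points lie on exactly
`q` lines of `S_π`; equivalently, there is exactly one point of `π` (the pole)
lying on no line of `S_π`. -/
theorem stmt_4 (K : Type) [Field K] [Fintype K] (q : ℕ) (hq : Fintype.card K = q)
    (hq_odd : Odd q) (S : Set (Submodule K (Fin 4 → K))) (hS : S ⊆ pgLine K)
    (h1 : P1 K S q) (h2 : P2 K S q) (h2a : P2a K S q) (h2b : P2b K S q) :
    ∀ π, IsTangent K S q π →
      {p | p ∈ pgPoint K ∧ p ≤ π ∧ (pencilS K S p π).ncard = q}.ncard = q ^ 2 + q ∧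
      (∃! p, p ∈ pgPoint K ∧ p ≤ π ∧ (pencilS K S p π).ncard = 0) :=
  stmt_4_general K q hq S hS h2a
end

section
/- Let π be a tangent plane with pole p_π. Then the q+1 lines of π that are not in S_π are precisely the lines of π passing through p_π. -/
open Submodule Set

/-!
A plane of `PG(3,q)` has `q² + q + 1` lines and a tangent plane `π` has `q²` of them in `S`, so
exactly `q + 1` lines of `π` are not in `S`. The pole lies on no line of `S_π`, so the `q + 1` lines
of `π` through it are among these, hence they are all of them.

The line counts come from counting vectors: a vector of `W` outside a subspace `p ≤ W` spans,
together with `p`, the unique subspace of dimension `dim p + 1` between `p` and `W` containing it,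
and each such subspace contains `q^(dim p + 1) - q^(dim p)` vectors outside `p`.
-/

open Module

instance Submodule.finite_of_finite {R M : Type*} [Semiring R] [AddCommMonoid M] [Module R M]
    [Finite M] : Finite (Submodule R M) :=
  Finite.of_injective _ SetLike.coe_injective

namespace Submodule

variable {K V : Type*} [Field K] [AddCommGroup V] [Module K V] [FiniteDimensional K V]

theorem mem_iff_eq_sup_span_singleton {p l : Submodule K V} {v : V} (hv : v ∉ p) (hpl : p ≤ l)
    (hl : finrank K l = finrank K p + 1) : v ∈ l ↔ l = p ⊔ K ∙ v := by
  refine ⟨fun hvl => ?_, fun h => h ▸ mem_sup_right (mem_span_singleton_self v)⟩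
  refine (eq_of_le_of_finrank_eq (sup_le hpl ((span_singleton_le_iff_mem v l).2 hvl)) ?_).symm
  rw [finrank_sup_span_singleton hv, hl]

variable [Fintype K]

theorem ncard_coe_eq_pow_finrank (W : Submodule K V) :
    (W : Set V).ncard = Fintype.card K ^ finrank K W := by
  rw [← Nat.card_coe_set_eq, ← Nat.card_eq_fintype_card]
  exact natCard_eq_pow_finrank (V := W)

theorem ncard_coe_sdiff {p W : Submodule K V} (hpW : p ≤ W) :
    ((W : Set V) \ p).ncard = Fintype.card K ^ finrank K W - Fintype.card K ^ finrank K p := by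
  have : Finite V := Module.finite_of_finite K
  rw [ncard_sdiff hpW, ncard_coe_eq_pow_finrank, ncard_coe_eq_pow_finrank]

theorem ncard_finrank_succ_between_mul {p W : Submodule K V} (hpW : p ≤ W) :
    {l : Submodule K V | finrank K l = finrank K p + 1 ∧ p ≤ l ∧ l ≤ W}.ncard *
      (Fintype.card K ^ (finrank K p + 1) - Fintype.card K ^ finrank K p) =
    Fintype.card K ^ finrank K W - Fintype.card K ^ finrank K p := by
  classical
  have : Finite V := Module.finite_of_finite K
  set T := {l : Submodule K V | finrank K l = finrank K p + 1 ∧ p ≤ l ∧ l ≤ W}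
  rw [← ncard_coe_sdiff hpW, ncard_eq_toFinset_card T, ncard_eq_toFinset_card ((W : Set V) \ p),
    eq_comm, ← mul_one (Finset.card _)]
  refine Finset.card_mul_eq_card_mul (fun v l => v ∈ l) (fun v hv => ?_) (fun l hl => ?_)
  · simp only [Set.Finite.mem_toFinset, Set.mem_sdiff, SetLike.mem_coe] at hv
    rw [Finset.card_eq_one]
    refine ⟨p ⊔ K ∙ v, ?_⟩
    ext l
    simp only [Finset.mem_bipartiteAbove, Set.Finite.mem_toFinset, Finset.mem_singleton, T,
      Set.mem_ofPred_eq]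
    constructor
    · rintro ⟨⟨hl, hpl, -⟩, hvl⟩
      exact (mem_iff_eq_sup_span_singleton hv.2 hpl hl).1 hvl
    · rintro rfl
      exact ⟨⟨finrank_sup_span_singleton hv.2, le_sup_left,
        sup_le hpW ((span_singleton_le_iff_mem v W).2 hv.1)⟩,
        mem_sup_right (mem_span_singleton_self v)⟩
  · obtain ⟨hl, hpl, hlW⟩ : l ∈ T := by simpa using hl
    rw [← hl, ← ncard_coe_sdiff hpl, ← ncard_coe_finset]
    congr 1
    ext v
    simp only [Finset.coe_bipartiteBelow, Set.mem_ofPred_eq, Set.Finite.mem_toFinset,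
      Set.mem_sdiff, SetLike.mem_coe]
    exact ⟨fun ⟨⟨_, hvp⟩, hvl⟩ => ⟨hvl, hvp⟩, fun ⟨hvl, hvp⟩ => ⟨⟨hlW hvl, hvp⟩, hvl⟩⟩

theorem ncard_points_mul (W : Submodule K V) :
    {x : Submodule K V | finrank K x = 1 ∧ x ≤ W}.ncard * (Fintype.card K - 1) =
      Fintype.card K ^ finrank K W - 1 := by
  simpa using ncard_finrank_succ_between_mul (bot_le : ⊥ ≤ W)

theorem ncard_points_of_finrank_eq_two {l : Submodule K V} (hl : finrank K l = 2) :
    {x : Submodule K V | finrank K x = 1 ∧ x ≤ l}.ncard = Fintype.card K + 1 := by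
  have hq : 2 ≤ Fintype.card K := Fintype.one_lt_card
  refine Nat.eq_of_mul_eq_mul_right (by omega : 0 < Fintype.card K - 1) ?_
  rw [ncard_points_mul, hl]
  zify [(by omega : 1 ≤ Fintype.card K), Nat.one_le_pow 2 _ (by omega : 0 < Fintype.card K)]
  ring

theorem ncard_points_of_finrank_eq_three {π : Submodule K V} (hπ : finrank K π = 3) :
    {x : Submodule K V | finrank K x = 1 ∧ x ≤ π}.ncard =
      Fintype.card K ^ 2 + Fintype.card K + 1 := by
  have hq : 2 ≤ Fintype.card K := Fintype.one_lt_card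
  refine Nat.eq_of_mul_eq_mul_right (by omega : 0 < Fintype.card K - 1) ?_
  rw [ncard_points_mul, hπ]
  zify [(by omega : 1 ≤ Fintype.card K), Nat.one_le_pow 3 _ (by omega : 0 < Fintype.card K)]
  ring

theorem ncard_lines_through_of_finrank_eq_three {p π : Submodule K V} (hp : finrank K p = 1)
    (hpπ : p ≤ π) (hπ : finrank K π = 3) :
    {l : Submodule K V | finrank K l = 2 ∧ p ≤ l ∧ l ≤ π}.ncard = Fintype.card K + 1 := by
  have hq : 2 ≤ Fintype.card K := Fintype.one_lt_card
  have h := ncard_finrank_succ_between_mul hpπ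
  rw [hp, hπ] at h
  have h12 : Fintype.card K ^ 1 < Fintype.card K ^ (1 + 1) := Nat.pow_lt_pow_right hq (by omega)
  have h13 : Fintype.card K ^ 1 ≤ Fintype.card K ^ 3 := Nat.pow_le_pow_right (by omega) (by omega)
  refine Nat.eq_of_mul_eq_mul_right (Nat.sub_pos_of_lt h12) (h.trans ?_)
  zify [h12.le, h13]
  ring

theorem ncard_lines_of_finrank_eq_three {π : Submodule K V} (hπ : finrank K π = 3) :
    {l : Submodule K V | finrank K l = 2 ∧ l ≤ π}.ncard =
      Fintype.card K ^ 2 + Fintype.card K + 1 := by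
  classical
  have : Finite V := Module.finite_of_finite K
  set P := {x : Submodule K V | finrank K x = 1 ∧ x ≤ π}
  set L := {l : Submodule K V | finrank K l = 2 ∧ l ≤ π}
  have hcount := Finset.card_mul_eq_card_mul (· ≤ ·) (s := P.toFinite.toFinset)
    (t := L.toFinite.toFinset) (m := Fintype.card K + 1) (n := Fintype.card K + 1) ?_ ?_
  · rw [← ncard_points_of_finrank_eq_three hπ, ncard_eq_toFinset_card P,
      ncard_eq_toFinset_card L]
    exact (Nat.eq_of_mul_eq_mul_right (Nat.succ_pos _) hcount).symm
  · intro x hx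
    obtain ⟨hx, hxπ⟩ : x ∈ P := by simpa using hx
    rw [← ncard_coe_finset, Finset.coe_bipartiteAbove,
      ← ncard_lines_through_of_finrank_eq_three hx hxπ hπ]
    congr 1
    ext l
    simp only [Set.Finite.mem_toFinset, Set.mem_ofPred_eq, L]
    tauto
  · intro l hl
    obtain ⟨hl, hlπ⟩ : l ∈ L := by simpa using hl
    rw [← ncard_coe_finset, Finset.coe_bipartiteBelow, ← ncard_points_of_finrank_eq_two hl]
    congr 1
    ext x
    simp only [Set.Finite.mem_toFinset, Set.mem_ofPred_eq, and_congr_left_iff,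
      and_iff_left_iff_imp, P]
    exact fun hxl _ => hxl.trans hlπ

end Submodule

section ProjectiveSpace

variable {K : Type} [Field K] [Fintype K]

theorem ncard_lines_not_mem_of_isTangent {S : Set (Submodule K (Fin 4 → K))}
    (hS : S ⊆ pgLine K) {π : Submodule K (Fin 4 → K)} (hπ : IsTangent K S (Fintype.card K) π) :
    {l | l ∈ pgLine K ∧ l ≤ π ∧ l ∉ S}.ncard = Fintype.card K + 1 := by
  have hdiff : {l | l ∈ pgLine K ∧ l ≤ π ∧ l ∉ S} =
      {l : Submodule K (Fin 4 → K) | finrank K l = 2 ∧ l ≤ π} \ linesIn K S π := by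
    ext l
    simp only [pgLine, linesIn, Set.mem_ofPred_eq, Set.mem_sdiff]
    tauto
  have hsub : linesIn K S π ⊆ {l : Submodule K (Fin 4 → K) | finrank K l = 2 ∧ l ≤ π} :=
    fun l ⟨hlS, hlπ⟩ => ⟨hS hlS, hlπ⟩
  rw [hdiff, ncard_sdiff hsub, Submodule.ncard_lines_of_finrank_eq_three hπ.1, hπ.2]
  omega

end ProjectiveSpace

theorem stmt_5_general (K : Type) [Field K] [Fintype K] (q : ℕ) (hq : Fintype.card K = q)
    (S : Set (Submodule K (Fin 4 → K))) (hS : S ⊆ pgLine K) :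
    ∀ π, IsTangent K S q π →
      ∀ p, p ∈ pgPoint K → p ≤ π → (pencilS K S p π).ncard = 0 →
        {l | l ∈ pgLine K ∧ l ≤ π ∧ l ∉ S} =
            {l | l ∈ pgLine K ∧ l ≤ π ∧ p ≤ l} ∧
        {l | l ∈ pgLine K ∧ l ≤ π ∧ l ∉ S}.ncard = q + 1 := by
  subst hq
  intro π hπ p hp hpπ hp0
  have hcard := ncard_lines_not_mem_of_isTangent hS hπ
  have hpencil : pencilS K S p π = ∅ := (ncard_eq_zero).1 hp0
  have hsub : {l | l ∈ pgLine K ∧ l ≤ π ∧ p ≤ l} ⊆ {l | l ∈ pgLine K ∧ l ≤ π ∧ l ∉ S} :=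
    fun l ⟨hl, hlπ, hpl⟩ => ⟨hl, hlπ, fun hlS => hpencil.subset ⟨hlS, hpl, hlπ⟩⟩
  have hthrough : {l | l ∈ pgLine K ∧ l ≤ π ∧ p ≤ l}.ncard = Fintype.card K + 1 := by
    rw [← Submodule.ncard_lines_through_of_finrank_eq_three hp hpπ hπ.1]
    congr 1
    ext l
    simp only [pgLine, Set.mem_ofPred_eq]
    tauto
  exact ⟨(eq_of_subset_of_ncard_le hsub (hcard.trans hthrough.symm).le).symm, hcard⟩

/-- For a tangent plane `π` with pole `p`, the `q+1` lines of `π`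
not in `S_π` are precisely the lines of `π` through `p`. -/
theorem stmt_5 (K : Type) [Field K] [Fintype K] (q : ℕ) (hq : Fintype.card K = q)
    (hq_odd : Odd q) (S : Set (Submodule K (Fin 4 → K))) (hS : S ⊆ pgLine K)
    (h1 : P1 K S q) (h2 : P2 K S q) (h2a : P2a K S q) (h2b : P2b K S q) :
    ∀ π, IsTangent K S q π →
      ∀ p, p ∈ pgPoint K → p ≤ π → (pencilS K S p π).ncard = 0 →
        {l | l ∈ pgLine K ∧ l ≤ π ∧ l ∉ S} =
            {l | l ∈ pgLine K ∧ l ≤ π ∧ p ≤ l} ∧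
        {l | l ∈ pgLine K ∧ l ≤ π ∧ l ∉ S}.ncard = q + 1 :=
  stmt_5_general K q hq S hS
end

section
/- Let π be a secant plane. If |γ(π)| = k, then |α(π)| = k(k-1)/2. -/
/-!
Let `d(x)` be the number of lines of `S_π` through a point `x` of the secant plane
`π ≅ PG(2,q)`. Counting incident point-line pairs and point-(ordered line pair) triples gives
`∑ 1 = q² + q + 1`, `∑ d = |S_π| (q + 1)` and `∑ d (d - 1) = |S_π| (|S_π| - 1)`, as two
distinct lines of `π` meet in exactly one point. Since `d` only takes the values `(q-1)/2`,
`(q+1)/2`, `q`, a quadratic in `d` vanishing at two of them counts the points where `d` takes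
the third value; this yields `|γ(π)| = q + 1` and `|α(π)| = q(q+1)/2`.
-/

open Submodule Set

open Finset Module
open scoped LinearAlgebra.Projectivization

section DoubleCounting
variable {α β : Type*} (r : α → β → Prop) [∀ a b, Decidable (r a b)]
  {s : Finset α} {t : Finset β}

theorem sum_card_bipartiteAbove_eq_card_mul {n : ℕ}
    (h : ∀ b ∈ t, #(s.bipartiteBelow r b) = n) :
    ∑ a ∈ s, #(t.bipartiteAbove r a) = #t * n := by
  rw [sum_card_bipartiteAbove_eq_sum_card_bipartiteBelow, sum_congr rfl h, sum_const, smul_eq_mul]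

theorem sum_card_offDiag_bipartiteAbove_eq_card_offDiag [DecidableEq β]
    (h : ∀ b ∈ t, ∀ b' ∈ t, b ≠ b' → #{a ∈ s | r a b ∧ r a b'} = 1) :
    ∑ a ∈ s, #(t.bipartiteAbove r a).offDiag = #t.offDiag := by
  have hpairs := sum_card_bipartiteAbove_eq_sum_card_bipartiteBelow
    (r := fun a (x : β × β) => r a x.1 ∧ r a x.2) (s := s) (t := t.offDiag)
  have hoff : ∀ a, t.offDiag.bipartiteAbove (fun a (x : β × β) => r a x.1 ∧ r a x.2) a
      = (t.bipartiteAbove r a).offDiag := fun a => by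
    ext x
    simp only [bipartiteAbove, mem_filter, Finset.mem_offDiag]
    tauto
  simp_rw [hoff] at hpairs
  rw [hpairs, card_eq_sum_ones]
  refine sum_congr rfl fun x hx => ?_
  obtain ⟨hx₁, hx₂, hne⟩ := Finset.mem_offDiag.1 hx
  exact h _ hx₁ _ hx₂ hne

end DoubleCounting

section Geometry
variable {K V : Type*} [Field K] [AddCommGroup V] [Module K V]

theorem ncard_finrank_eq_one_le_eq_card_projectivization (W : Submodule K V) :
    {p : Submodule K V | finrank K p = 1 ∧ p ≤ W}.ncard = Nat.card (ℙ K W) := by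
  rw [← Nat.card_coe_set_eq, Nat.card_congr (Projectivization.equivSubmodule K W)]
  refine (Nat.card_congr ?_).symm
  refine ((Submodule.MapSubtype.orderIso W).toEquiv.subtypeEquiv fun H => ?_).trans
    ((Equiv.subtypeSubtypeEquivSubtypeInter (· ≤ W) (fun p => finrank K p = 1)).trans
      (Equiv.setCongr (by ext; exact and_comm)))
  show _ ↔ finrank K (H.map W.subtype) = 1
  rw [Submodule.finrank_map_subtype_eq]

theorem finrank_inf_eq_one_of_finrank_eq_two [FiniteDimensional K V] {π l l' : Submodule K V}
    (hπ : finrank K π = 3) (hl : finrank K l = 2) (hl' : finrank K l' = 2)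
    (hlπ : l ≤ π) (hl'π : l' ≤ π) (hne : l ≠ l') : finrank K ↥(l ⊓ l') = 1 := by
  have hl'l : ¬l' ≤ l := fun h =>
    hne (Submodule.eq_of_le_of_finrank_eq h (hl'.trans hl.symm)).symm
  have hsup : finrank K ↥(l ⊔ l') = 3 :=
    le_antisymm (hπ ▸ Submodule.finrank_mono (sup_le hlπ hl'π))
      (hl ▸ Submodule.finrank_lt_finrank_of_lt (left_lt_sup.2 hl'l) : 2 < _)
  have := Submodule.finrank_sup_add_finrank_inf_eq l l'
  omega

variable [Finite K] {π : Submodule K V} {P : Finset (Submodule K V)}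

open Classical in
theorem card_filter_le_eq_sum_pow (hP : ∀ p, p ∈ P ↔ finrank K p = 1 ∧ p ≤ π)
    {W : Submodule K V} (hW : W ≤ π) :
    #{p ∈ P | p ≤ W} = ∑ i ∈ range (finrank K W), Nat.card K ^ i := by
  rw [← Projectivization.card_of_finrank K W rfl,
    ← ncard_finrank_eq_one_le_eq_card_projectivization, ← Set.ncard_coe_finset, coe_filter]
  congr 1
  ext p
  simp only [hP, Set.mem_ofPred_eq]
  exact ⟨fun h => ⟨h.1.1, h.2⟩, fun h => ⟨⟨h.1, h.2.trans hW⟩, h.2⟩⟩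

theorem card_eq_sq_add_add_one_of_mem_iff (hπ : finrank K π = 3)
    (hP : ∀ p, p ∈ P ↔ finrank K p = 1 ∧ p ≤ π) :
    #P = Nat.card K ^ 2 + Nat.card K + 1 := by
  classical
  rw [← filter_true_of_mem (s := P) (p := (· ≤ π)) fun p hp => ((hP p).1 hp).2,
    card_filter_le_eq_sum_pow hP le_rfl, hπ]
  simp only [sum_range_succ, sum_range_zero]
  ring

variable {T : Finset (Submodule K V)}

open Classical in
theorem sum_card_pencil_eq_card_mul (hP : ∀ p, p ∈ P ↔ finrank K p = 1 ∧ p ≤ π)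
    (hT : ∀ l ∈ T, finrank K l = 2 ∧ l ≤ π) :
    ∑ p ∈ P, #(T.bipartiteAbove (· ≤ ·) p) = #T * (Nat.card K + 1) :=
  sum_card_bipartiteAbove_eq_card_mul _ fun l hl => by
    rw [bipartiteBelow, card_filter_le_eq_sum_pow hP (hT l hl).2, (hT l hl).1]
    simp only [sum_range_succ, sum_range_zero]
    ring

open Classical in
theorem sum_card_offDiag_pencil_eq_card_offDiag [FiniteDimensional K V] (hπ : finrank K π = 3)
    (hP : ∀ p, p ∈ P ↔ finrank K p = 1 ∧ p ≤ π)
    (hT : ∀ l ∈ T, finrank K l = 2 ∧ l ≤ π) :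
    ∑ p ∈ P, #(T.bipartiteAbove (· ≤ ·) p).offDiag = #T.offDiag :=
  sum_card_offDiag_bipartiteAbove_eq_card_offDiag _ fun l hl l' hl' hne => by
    obtain ⟨hl2, hlπ⟩ := hT l hl
    obtain ⟨hl'2, hl'π⟩ := hT l' hl'
    simp_rw [← le_inf_iff]
    rw [card_filter_le_eq_sum_pow hP (inf_le_left.trans hlπ),
      finrank_inf_eq_one_of_finrank_eq_two hπ hl2 hl'2 hlπ hl'π hne]
    simp

end Geometry

theorem card_filter_eq_of_moments {α : Type*} {P : Finset α} {d : α → ℕ} {m t : ℕ}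
    (hm : m ≠ 0)
    (hd : ∀ p ∈ P, d p = m ∨ d p = m + 1 ∨ d p = 2 * m + 1)
    (hP : #P = (2 * m + 1) ^ 2 + (2 * m + 1) + 1) (ht : t = (2 * m + 1) * (m + 1))
    (h1 : ∑ p ∈ P, d p = t * (2 * m + 2)) (h2 : ∑ p ∈ P, (d p * d p - d p) = t * t - t) :
    #{p ∈ P | d p = 2 * m + 1} = 2 * m + 2 ∧ #{p ∈ P | d p = m} = (2 * m + 1) * (m + 1) := by
  have h1' : ∑ p ∈ P, (d p : ℤ) = t * (2 * m + 2) := by exact_mod_cast h1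
  have h2' : ∑ p ∈ P, (d p : ℤ) * (d p - 1) = t * (t - 1) := by
    have := congrArg (Nat.cast : ℕ → ℤ) h2
    push_cast [Nat.cast_sub (Nat.le_mul_self _)] at this
    simpa only [mul_sub_one] using this
  have count : ∀ (a b c : ℤ) (Q : α → Prop) [DecidablePred Q],
      (∀ p ∈ P, ((d p : ℤ) - a) * (d p - b) = if Q p then c else 0) →
      (#{p ∈ P | Q p} : ℤ) * c =
        t * (t - 1) - (a + b - 1) * (t * (2 * m + 2)) + a * b * #P := by
    intro a b c Q _ hQ
    calc (#{p ∈ P | Q p} : ℤ) * c = ∑ p ∈ P, if Q p then c else 0 := by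
          rw [sum_ite, sum_const_zero, sum_const, nsmul_eq_mul, add_zero]
      _ = ∑ p ∈ P, ((d p : ℤ) * (d p - 1) - (a + b - 1) * d p + a * b) := by
          refine sum_congr rfl fun p hp => ?_
          rw [← hQ p hp]
          ring
      _ = _ := by
          rw [sum_add_distrib, sum_sub_distrib, ← mul_sum, sum_const, nsmul_eq_mul, h1', h2']
          ring
  have hG := count m (m + 1) (m * (m + 1)) (d · = 2 * m + 1) fun p hp => by
    split_ifs <;> rcases hd p hp with h | h | h <;>
      first | omega | (rw [h]; push_cast; ring)
  have hA := count (m + 1) (2 * m + 1) (m + 1) (d · = m) fun p hp => by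
    split_ifs <;> rcases hd p hp with h | h | h <;>
      first | omega | (rw [h]; push_cast; ring)
  rw [hP, ht] at hG hA
  push_cast at hG hA
  have hm' : (m : ℤ) * (m + 1) ≠ 0 := by positivity
  constructor
  · have := mul_right_cancel₀ hm' (hG.trans (by ring : _ = (2 * m + 2 : ℤ) * (m * (m + 1))))
    exact_mod_cast this
  · have := mul_right_cancel₀ (by positivity : (m + 1 : ℤ) ≠ 0)
      (hA.trans (by ring : _ = ((2 * m + 1) * (m + 1) : ℤ) * (m + 1)))
    exact_mod_cast this

theorem ncard_gammaSet_and_alphaSet {K : Type} [Field K] [Fintype K] {m : ℕ} (hm : m ≠ 0)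
    (hq : Fintype.card K = 2 * m + 1) {S : Set (Submodule K (Fin 4 → K))} (hS : S ⊆ pgLine K)
    (h2b : P2b K S (2 * m + 1)) {π : Submodule K (Fin 4 → K)}
    (hπ : IsSecant K S (2 * m + 1) π) :
    (gammaSet K S (2 * m + 1) π).ncard = 2 * m + 2 ∧
      (alphaSet K S (2 * m + 1) π).ncard = (2 * m + 1) * (m + 1) := by
  classical
  let := Fintype.ofFinite (Submodule K (Fin 4 → K))
  obtain ⟨hπ3, hπS⟩ := hπ
  have hcard : Nat.card K = 2 * m + 1 := Nat.card_eq_fintype_card.trans hq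
  set P : Finset (Submodule K (Fin 4 → K)) := {p | p ∈ pgPoint K ∧ p ≤ π}
  set T : Finset (Submodule K (Fin 4 → K)) := {l | l ∈ S ∧ l ≤ π}
  set deg := fun p => #(T.bipartiteAbove (· ≤ ·) p)
  have hP : ∀ p, p ∈ P ↔ finrank K p = 1 ∧ p ≤ π := fun p => mem_filter_univ p
  have hT : ∀ l ∈ T, finrank K l = 2 ∧ l ≤ π := fun l hl =>
    ⟨hS ((mem_filter_univ l).1 hl).1, ((mem_filter_univ l).1 hl).2⟩
  have hpencil : ∀ p, (pencilS K S p π).ncard = deg p := fun p => by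
    show _ = #(T.bipartiteAbove (· ≤ ·) p)
    rw [← Set.ncard_coe_finset]
    congr 1
    ext l
    simp only [pencilS, bipartiteAbove, T, coe_filter, mem_filter_univ, Set.mem_ofPred_eq]
    tauto
  have hclass : ∀ n, {p | p ∈ pgPoint K ∧ p ≤ π ∧ (pencilS K S p π).ncard = n}.ncard
      = #{p ∈ P | deg p = n} := fun n => by
    rw [← Set.ncard_coe_finset]
    congr 1
    ext p
    simp [P, hpencil, and_assoc]
  have hTcard : #T = (2 * m + 1) * (m + 1) := by
    rw [← Set.ncard_coe_finset, coe_filter_univ]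
    exact hπS.trans (Nat.div_eq_of_eq_mul_left two_pos (by ring))
  have hdeg : ∀ p ∈ P, deg p = m ∨ deg p = m + 1 ∨ deg p = 2 * m + 1 := fun p hp => by
    have := h2b π hπ3 hπS p ((hP p).1 hp).1 ((hP p).1 hp).2
    rw [hpencil] at this
    omega
  have hPcard : #P = (2 * m + 1) ^ 2 + (2 * m + 1) + 1 := by
    rw [card_eq_sq_add_add_one_of_mem_iff hπ3 hP, hcard]
  have h1 := sum_card_pencil_eq_card_mul hP hT
  have h2 := sum_card_offDiag_pencil_eq_card_offDiag hπ3 hP hT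
  rw [hcard] at h1
  simp only [offDiag_card] at h2
  obtain ⟨hγ, hα⟩ := card_filter_eq_of_moments hm hdeg hPcard hTcard h1 h2
  have hhalf : (2 * m + 1 - 1) / 2 = m := by omega
  rw [gammaSet, alphaSet, hclass, hclass, hhalf]
  exact ⟨hγ, hα⟩

theorem stmt_9_general (K : Type) [Field K] [Fintype K] (q : ℕ) (hq : Fintype.card K = q)
    (hq_odd : Odd q) (S : Set (Submodule K (Fin 4 → K))) (hS : S ⊆ pgLine K)
    (h2b : P2b K S q) :
    ∀ π, IsSecant K S q π → ∀ k : ℕ, (gammaSet K S q π).ncard = k →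
      (alphaSet K S q π).ncard = k * (k - 1) / 2 := by
  rintro π hπ k rfl
  obtain ⟨m, rfl⟩ := hq_odd
  have hm : m ≠ 0 := by
    have := hq ▸ Fintype.one_lt_card (α := K)
    omega
  obtain ⟨hγ, hα⟩ := ncard_gammaSet_and_alphaSet hm hq hS h2b hπ
  rw [hγ, hα, show 2 * m + 2 - 1 = 2 * m + 1 by omega]
  exact (Nat.div_eq_of_eq_mul_left two_pos (by ring)).symm

/-- For a secant plane `π`, if `|γ(π)| = k` then
`|α(π)| = k(k-1)/2`. -/
theorem stmt_9 (K : Type) [Field K] [Fintype K] (q : ℕ) (hq : Fintype.card K = q)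
    (hq_odd : Odd q) (S : Set (Submodule K (Fin 4 → K))) (hS : S ⊆ pgLine K)
    (h1 : P1 K S q) (h2 : P2 K S q) (h2a : P2a K S q) (h2b : P2b K S q) :
    ∀ π, IsSecant K S q π → ∀ k : ℕ, (gammaSet K S q π).ncard = k →
      (alphaSet K S q π).ncard = k * (k - 1) / 2 :=
  stmt_9_general K q hq hq_odd S hS h2b
end

section
/- For every secant plane π, the set γ(π) is an oval in the projective plane π (so |γ(π)| = q+1), and S_π is precisely the set of lines of π meeting γ(π) in exactly two points. -/
/-
Write `q = 2m + 1` and let `d(p)` be the number of lines of `S_π` through a point `p` of the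
secant plane `π`, so `d(p) ∈ {m, m + 1, 2m + 1}`. Counting incidences and pairs of lines of
`S_π` (any two meet in exactly one point) gives `∑ d = |S_π| (q + 1)` and
`∑ d (d - 1) = |S_π| (|S_π| - 1)`; since `(d - m)(d - m - 1)` vanishes unless `d = 2m + 1`,
these determine `|γ(π)| = q + 1`. On a line `l` of `π`, the same count gives
`∑_{p ∈ l} (d(p) - m) = m + 1`, plus `q` if `l ∈ S_π`; as `d - m ≥ 0` with `d - m = m + 1` on
`γ(π)`, the line meets `γ(π)` in at most two points, and in at most one if `l ∉ S_π`. Finally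
`∑_{l ∈ S_π} |l ∩ γ(π)| = (q + 1) q = 2 |S_π|` forces every line of `S_π` to be a secant of
the oval `γ(π)`.
-/

open Submodule Set

open Finset Module

theorem Finset.mul_card_add_mul_card_filter_le_sum {ι : Type*} {s : Finset ι} {f : ι → ℕ}
    {a b : ℕ} (hab : a ≤ b) (hf : ∀ i ∈ s, a ≤ f i) :
    a * #s + (b - a) * #{i ∈ s | f i = b} ≤ ∑ i ∈ s, f i := by
  calc a * #s + (b - a) * #{i ∈ s | f i = b}
      = ∑ i ∈ s, (a + if f i = b then b - a else 0) := by
        rw [sum_add_distrib, ← sum_filter, sum_const, sum_const, smul_eq_mul, smul_eq_mul,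
          mul_comm, mul_comm (b - a)]
    _ ≤ ∑ i ∈ s, f i := sum_le_sum fun i hi => by have := hf i hi; split_ifs <;> omega

section IncidenceCounting

variable {α β : Type*} (I : α → β → Prop) [∀ a b, Decidable (I a b)]

/-- The incidence counts of a projective plane of order `q` with points `P` and lines `A`. -/
structure IsPlaneOfOrder (P : Finset α) (A : Finset β) (q : ℕ) : Prop where
  card_points : #P = q ^ 2 + q + 1
  card_bipartiteBelow : ∀ l ∈ A, #(P.bipartiteBelow I l) = q + 1
  card_common : ∀ l ∈ A, ∀ l' ∈ A, l ≠ l' → #{p ∈ P | I p l ∧ I p l'} = 1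

def pointsOfDegree (P : Finset α) (L : Finset β) (k : ℕ) : Finset α :=
  {p ∈ P | #(L.bipartiteAbove I p) = k}

/-- `L` models `S_π` for a secant plane `π` of order `q = 2m + 1`, so that
`pointsOfDegree I P L q` is `γ(π)`. -/
structure IsSecantFamily (P : Finset α) (A L : Finset β) (m : ℕ) : Prop where
  isPlaneOfOrder : IsPlaneOfOrder I P A (2 * m + 1)
  subset : L ⊆ A
  card_eq : #L = (2 * m + 1) * (m + 1)
  degree : ∀ p ∈ P, #(L.bipartiteAbove I p) = m ∨ #(L.bipartiteAbove I p) = m + 1 ∨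
    #(L.bipartiteAbove I p) = 2 * m + 1

variable {I} {P : Finset α} {A L : Finset β} {q m : ℕ}

namespace IsPlaneOfOrder

theorem sum_card_bipartiteAbove (hPA : IsPlaneOfOrder I P A q) (hLA : L ⊆ A) :
    ∑ p ∈ P, #(L.bipartiteAbove I p) = #L * (q + 1) := by
  rw [sum_card_bipartiteAbove_eq_sum_card_bipartiteBelow,
    sum_const_nat fun l hl => hPA.card_bipartiteBelow l (hLA hl)]

theorem sum_card_bipartiteAbove_mul_pred (hPA : IsPlaneOfOrder I P A q) (hLA : L ⊆ A) :
    ∑ p ∈ P, #(L.bipartiteAbove I p) * (#(L.bipartiteAbove I p) - 1) = #L * (#L - 1) := by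
  have hpairs : ∀ p, (L.bipartiteAbove I p).offDiag
      = L.offDiag.bipartiteAbove (fun p x => I p x.1 ∧ I p x.2) p := by
    intro p; ext x; simp only [Finset.mem_offDiag, mem_bipartiteAbove]; tauto
  have hcommon : ∀ x ∈ L.offDiag, #(P.bipartiteBelow (fun p x => I p x.1 ∧ I p x.2) x) = 1 := by
    intro x hx
    obtain ⟨hx₁, hx₂, hne⟩ := Finset.mem_offDiag.1 hx
    exact hPA.card_common _ (hLA hx₁) _ (hLA hx₂) hne
  simp_rw [Nat.mul_sub_one, ← offDiag_card, hpairs]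
  rw [sum_card_bipartiteAbove_eq_sum_card_bipartiteBelow, sum_const_nat hcommon, mul_one]

theorem sum_card_bipartiteAbove_of_mem [DecidableEq β] (hPA : IsPlaneOfOrder I P A q)
    (hLA : L ⊆ A) {l : β} (hl : l ∈ A) :
    ∑ p ∈ P.bipartiteBelow I l, #(L.bipartiteAbove I p) = #L + if l ∈ L then q else 0 := by
  have hmeet : ∀ l' ∈ L, #((P.bipartiteBelow I l).bipartiteBelow I l')
      = 1 + if l = l' then q else 0 := by
    intro l' hl'
    split_ifs with h
    · subst h
      rw [add_comm, ← hPA.card_bipartiteBelow l hl]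
      congr 1
      ext p; simp
    · rw [← hPA.card_common l hl l' (hLA hl') h, bipartiteBelow, bipartiteBelow, filter_filter,
        add_zero]
  rw [sum_card_bipartiteAbove_eq_sum_card_bipartiteBelow, sum_congr rfl hmeet, sum_add_distrib,
    sum_ite_eq, card_eq_sum_ones]

end IsPlaneOfOrder

namespace IsSecantFamily

theorem card_pointsOfDegree (hL : IsSecantFamily I P A L m) (hm : 0 < m) :
    #(pointsOfDegree I P L (2 * m + 1)) = 2 * m + 2 := by
  set d : α → ℕ := fun p => #(L.bipartiteAbove I p)
  have hsum : ∑ p ∈ P, (d p : ℤ) = #L * (2 * m + 2) := by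
    exact_mod_cast hL.isPlaneOfOrder.sum_card_bipartiteAbove hL.subset
  have hsum_pred : ∑ p ∈ P, (d p : ℤ) * (d p - 1) = #L * (#L - 1) := by
    have hcast : ∀ n : ℕ, ((n * (n - 1) : ℕ) : ℤ) = n * (n - 1) := by
      rintro (_ | n) <;> simp
    have h := congrArg (Nat.cast : ℕ → ℤ)
      (hL.isPlaneOfOrder.sum_card_bipartiteAbove_mul_pred hL.subset)
    simpa only [Nat.cast_sum, hcast] using h
  have hterm : ∀ p ∈ P, ((d p : ℤ) - m) * (d p - m - 1)
      = if d p = 2 * m + 1 then (m * (m + 1) : ℤ) else 0 := by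
    intro p hp
    rcases hL.degree p hp with h | h | h <;> simp only [d, h] <;> push_cast <;>
      (try split_ifs) <;> first | omega | ring
  have hcount : (#(pointsOfDegree I P L (2 * m + 1)) : ℤ) * (m * (m + 1))
      = ∑ p ∈ P, (((d p : ℤ) * (d p - 1)) - 2 * m * d p + m * (m + 1)) := by
    rw [sum_congr rfl fun p _ => (by ring : ((d p : ℤ) * (d p - 1)) - 2 * m * d p + m * (m + 1)
      = ((d p : ℤ) - m) * (d p - m - 1)), sum_congr rfl hterm, ← sum_filter, sum_const,
      nsmul_eq_mul, pointsOfDegree]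
  rw [sum_add_distrib, sum_sub_distrib, ← mul_sum, hsum_pred, hsum, sum_const, nsmul_eq_mul,
    hL.isPlaneOfOrder.card_points, hL.card_eq] at hcount
  have hm' : (m * (m + 1) : ℤ) ≠ 0 := by positivity
  have : (#(pointsOfDegree I P L (2 * m + 1)) : ℤ) = 2 * m + 2 :=
    mul_right_cancel₀ hm' (by push_cast at hcount; linear_combination hcount)
  exact_mod_cast this

variable [DecidableEq β]

theorem mul_card_bipartiteBelow_le (hL : IsSecantFamily I P A L m) {l : β} (hl : l ∈ A) :
    (m + 1) * #((pointsOfDegree I P L (2 * m + 1)).bipartiteBelow I l)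
      ≤ m + 1 + if l ∈ L then 2 * m + 1 else 0 := by
  have h := mul_card_add_mul_card_filter_le_sum (s := P.bipartiteBelow I l)
    (f := fun p => #(L.bipartiteAbove I p)) (a := m) (b := 2 * m + 1) (by omega)
    fun p hp => by rcases hL.degree p (filter_subset _ _ hp) with h | h | h <;> omega
  rw [hL.isPlaneOfOrder.card_bipartiteBelow l hl,
    hL.isPlaneOfOrder.sum_card_bipartiteAbove_of_mem hL.subset hl, hL.card_eq,
    show 2 * m + 1 - m = m + 1 by omega, bipartiteBelow, filter_comm, ← pointsOfDegree,
    ← bipartiteBelow] at h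
  split_ifs at h ⊢ <;> nlinarith

theorem card_bipartiteBelow_le_two (hL : IsSecantFamily I P A L m) {l : β} (hl : l ∈ A) :
    #((pointsOfDegree I P L (2 * m + 1)).bipartiteBelow I l) ≤ 2 := by
  have h := hL.mul_card_bipartiteBelow_le hl
  split_ifs at h <;> nlinarith

theorem card_bipartiteBelow_le_one (hL : IsSecantFamily I P A L m) {l : β} (hl : l ∈ A)
    (hlL : l ∉ L) : #((pointsOfDegree I P L (2 * m + 1)).bipartiteBelow I l) ≤ 1 := by
  have h := hL.mul_card_bipartiteBelow_le hl
  rw [if_neg hlL] at h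
  nlinarith

theorem mem_iff_card_bipartiteBelow_eq_two (hL : IsSecantFamily I P A L m) (hm : 0 < m)
    {l : β} (hl : l ∈ A) :
    l ∈ L ↔ #((pointsOfDegree I P L (2 * m + 1)).bipartiteBelow I l) = 2 := by
  refine ⟨fun hlL => ?_, fun h => ?_⟩
  · have hdeg : ∀ p ∈ pointsOfDegree I P L (2 * m + 1), #(L.bipartiteAbove I p) = 2 * m + 1 :=
      fun p hp => (mem_filter.1 hp).2
    have hsum : ∑ l ∈ L, #((pointsOfDegree I P L (2 * m + 1)).bipartiteBelow I l)
        = ∑ _l ∈ L, 2 := by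
      rw [← sum_card_bipartiteAbove_eq_sum_card_bipartiteBelow, sum_const_nat hdeg,
        hL.card_pointsOfDegree hm, sum_const, smul_eq_mul, hL.card_eq]
      ring
    exact (sum_eq_sum_iff_of_le fun l' hl' => hL.card_bipartiteBelow_le_two (hL.subset hl')).1
      hsum l hlL
  · by_contra hlL
    have := hL.card_bipartiteBelow_le_one hl hlL
    omega

end IsSecantFamily

end IncidenceCounting

namespace Submodule

variable {K V : Type*} [Field K] [AddCommGroup V] [Module K V]

theorem ncard_setOf_finrank_eq_one_le (W : Submodule K V) :
    {p : Submodule K V | finrank K p = 1 ∧ p ≤ W}.ncard = Nat.card (Projectivization K W) := by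
  have himage : {p : Submodule K V | finrank K p = 1 ∧ p ≤ W}
      = (fun U : Submodule K W => U.map W.subtype) '' {U | finrank K U = 1} := by
    ext p
    refine ⟨fun ⟨hp, hpW⟩ => ⟨p.comap W.subtype, ?_, ?_⟩, ?_⟩
    · rw [Set.mem_ofPred_eq, ← finrank_map_subtype_eq, map_comap_subtype, inf_of_le_right hpW, hp]
    · exact (map_comap_subtype W p).trans (inf_of_le_right hpW)
    · rintro ⟨U, hU, rfl⟩
      exact ⟨(finrank_map_subtype_eq W U).trans hU, map_subtype_le W U⟩
  rw [himage, Set.ncard_image_of_injective _ (map_injective_of_injective W.injective_subtype),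
    ← Nat.card_coe_set_eq, Nat.card_congr (Projectivization.equivSubmodule K W)]
  rfl

theorem setOf_finrank_eq_one_le_eq_singleton {W : Submodule K V} (hW : finrank K W = 1) :
    {p : Submodule K V | finrank K p = 1 ∧ p ≤ W} = {W} := by
  have : FiniteDimensional K W := .of_finrank_eq_succ hW
  ext p
  refine ⟨fun ⟨hp, hpW⟩ => eq_of_le_of_finrank_eq hpW (hp.trans hW.symm), ?_⟩
  rintro rfl
  exact ⟨hW, le_rfl⟩

theorem finrank_inf_eq_one [FiniteDimensional K V] {π l l' : Submodule K V} (hπ : finrank K π = 3)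
    (hl : finrank K l = 2) (hl' : finrank K l' = 2) (hlπ : l ≤ π) (hl'π : l' ≤ π)
    (hne : l ≠ l') : finrank K ↥(l ⊓ l') = 1 := by
  have hsup : finrank K ↥(l ⊔ l') ≤ 3 := hπ ▸ finrank_mono (sup_le hlπ hl'π)
  have hinf : finrank K ↥(l ⊓ l') ≠ 2 := fun h =>
    hne ((eq_of_le_of_finrank_eq inf_le_left (h.trans hl.symm)).symm.trans
      (eq_of_le_of_finrank_eq inf_le_right (h.trans hl'.symm)))
  have hle : finrank K ↥(l ⊓ l') ≤ 2 := hl ▸ finrank_mono inf_le_left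
  have := finrank_sup_add_finrank_inf_eq l l'
  omega

variable [Finite V]

noncomputable def pointsLE (W : Submodule K V) : Finset (Submodule K V) :=
  (Set.toFinite {p : Submodule K V | finrank K p = 1 ∧ p ≤ W}).toFinset

noncomputable def linesLE (W : Submodule K V) : Finset (Submodule K V) :=
  (Set.toFinite {l : Submodule K V | finrank K l = 2 ∧ l ≤ W}).toFinset

@[simp]
theorem mem_pointsLE {p W : Submodule K V} : p ∈ W.pointsLE ↔ finrank K p = 1 ∧ p ≤ W :=
  Set.Finite.mem_toFinset _

@[simp]
theorem mem_linesLE {l W : Submodule K V} : l ∈ W.linesLE ↔ finrank K l = 2 ∧ l ≤ W :=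
  Set.Finite.mem_toFinset _

open scoped Classical in
theorem isPlaneOfOrder_pointsLE_linesLE [Finite K] {π : Submodule K V} (hπ : finrank K π = 3) :
    IsPlaneOfOrder (· ≤ ·) π.pointsLE π.linesLE (Nat.card K) := by
  have : FiniteDimensional K V := Module.Finite.of_finite
  refine ⟨?_, fun l hl => ?_, fun l hl l' hl' hne => ?_⟩
  · rw [pointsLE, ← Set.ncard_eq_toFinset_card, ncard_setOf_finrank_eq_one_le,
      Projectivization.card_of_finrank K π hπ]
    simp only [sum_range_succ, sum_range_zero]
    ring
  · obtain ⟨hl2, hlπ⟩ := mem_linesLE.1 hl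
    have hpoints : (↑(π.pointsLE.bipartiteBelow (· ≤ ·) l) : Set (Submodule K V))
        = ({p | finrank K p = 1 ∧ p ≤ l} : Set (Submodule K V)) := by
      ext p
      simp only [coe_bipartiteBelow, mem_pointsLE, Set.mem_ofPred_eq]
      exact ⟨fun ⟨⟨h1, _⟩, h2⟩ => ⟨h1, h2⟩, fun ⟨h1, h2⟩ => ⟨⟨h1, h2.trans hlπ⟩, h2⟩⟩
    rw [← Set.ncard_coe_finset, hpoints, ncard_setOf_finrank_eq_one_le,
      Projectivization.card_of_finrank_two K l hl2]
  · obtain ⟨hl2, hlπ⟩ := mem_linesLE.1 hl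
    obtain ⟨hl'2, hl'π⟩ := mem_linesLE.1 hl'
    have hpoints : (↑{p ∈ π.pointsLE | p ≤ l ∧ p ≤ l'} : Set (Submodule K V))
        = ({p | finrank K p = 1 ∧ p ≤ l ⊓ l'} : Set (Submodule K V)) := by
      ext p
      simp only [coe_filter, mem_pointsLE, Set.mem_ofPred_eq, le_inf_iff]
      exact ⟨fun ⟨⟨h1, _⟩, h2⟩ => ⟨h1, h2⟩, fun ⟨h1, h2⟩ => ⟨⟨h1, h2.1.trans hlπ⟩, h2⟩⟩
    rw [← Set.ncard_coe_finset, hpoints, setOf_finrank_eq_one_le_eq_singleton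
      (finrank_inf_eq_one hπ hl2 hl'2 hlπ hl'π hne), Set.ncard_singleton]

end Submodule

section SecantPlane

open scoped Classical

variable {K : Type} [Field K] [Fintype K] {S : Set (Submodule K (Fin 4 → K))}
  {π : Submodule K (Fin 4 → K)}

variable (K S π) in
noncomputable def finsetLinesIn : Finset (Submodule K (Fin 4 → K)) :=
  (Set.toFinite (linesIn K S π)).toFinset

@[simp]
theorem mem_finsetLinesIn {l : Submodule K (Fin 4 → K)} :
    l ∈ finsetLinesIn K S π ↔ l ∈ S ∧ l ≤ π :=
  Set.Finite.mem_toFinset _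

theorem ncard_pencilS (p : Submodule K (Fin 4 → K)) :
    (pencilS K S p π).ncard = #((finsetLinesIn K S π).bipartiteAbove (· ≤ ·) p) := by
  rw [← Set.ncard_coe_finset]
  congr 1
  ext l
  simp only [coe_bipartiteAbove, mem_finsetLinesIn, pencilS, Set.mem_ofPred_eq]
  tauto

theorem gammaSet_eq_coe_pointsOfDegree (q : ℕ) :
    gammaSet K S q π = ↑(pointsOfDegree (· ≤ ·) π.pointsLE (finsetLinesIn K S π) q) := by
  ext p
  simp only [gammaSet, pointsOfDegree, coe_filter, mem_pointsLE, ncard_pencilS,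
    Set.mem_ofPred_eq]
  exact ⟨fun ⟨h1, h2, h3⟩ => ⟨⟨h1, h2⟩, h3⟩, fun ⟨⟨h1, h2⟩, h3⟩ => ⟨h1, h2, h3⟩⟩

theorem isSecantFamily_of_isSecant {m : ℕ} (hq : Fintype.card K = 2 * m + 1)
    (hS : S ⊆ pgLine K) (h2b : P2b K S (2 * m + 1)) (hsec : IsSecant K S (2 * m + 1) π) :
    IsSecantFamily (· ≤ ·) π.pointsLE π.linesLE (finsetLinesIn K S π) m where
  isPlaneOfOrder := by
    simpa only [Nat.card_eq_fintype_card, hq] using isPlaneOfOrder_pointsLE_linesLE hsec.1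
  subset l hl := by
    obtain ⟨hlS, hlπ⟩ := mem_finsetLinesIn.1 hl
    exact mem_linesLE.2 ⟨hS hlS, hlπ⟩
  card_eq := by
    rw [finsetLinesIn, ← Set.ncard_eq_toFinset_card, hsec.2]
    exact Nat.div_eq_of_eq_mul_left two_pos (by ring)
  degree p hp := by
    obtain ⟨hp1, hpπ⟩ := mem_pointsLE.1 hp
    rw [← ncard_pencilS]
    rcases h2b π hsec.1 hsec.2 p hp1 hpπ with h | h | h <;> omega

end SecantPlane

theorem stmt_10_general (K : Type) [Field K] [Fintype K] (q : ℕ) (hq : Fintype.card K = q)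
    (hq_odd : Odd q) (S : Set (Submodule K (Fin 4 → K))) (hS : S ⊆ pgLine K)
    (h2b : P2b K S q) :
    ∀ π, IsSecant K S q π →
      ((gammaSet K S q π).Nonempty ∧
        (∀ l ∈ pgLine K, l ≤ π →
          {p | p ∈ gammaSet K S q π ∧ p ≤ l}.ncard ≤ 2) ∧
        (gammaSet K S q π).ncard = q + 1) ∧
      (∀ l, (l ∈ S ∧ l ≤ π) ↔
        (l ∈ pgLine K ∧ l ≤ π ∧
          {p | p ∈ gammaSet K S q π ∧ p ≤ l}.ncard = 2)) := by
  classical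
  intro π hsec
  obtain ⟨m, rfl⟩ := hq_odd
  have hm : 0 < m := by have := Fintype.one_lt_card (α := K); omega
  have hL := isSecantFamily_of_isSecant hq hS h2b hsec
  have hγl : ∀ l, {p | p ∈ gammaSet K S (2 * m + 1) π ∧ p ≤ l}.ncard = #((pointsOfDegree
      (· ≤ ·) π.pointsLE (finsetLinesIn K S π) (2 * m + 1)).bipartiteBelow (· ≤ ·) l) := by
    intro l
    rw [← Set.ncard_coe_finset, coe_bipartiteBelow, gammaSet_eq_coe_pointsOfDegree]
    rfl
  have hγ : (gammaSet K S (2 * m + 1) π).ncard = 2 * m + 1 + 1 := by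
    rw [gammaSet_eq_coe_pointsOfDegree, Set.ncard_coe_finset, hL.card_pointsOfDegree hm]
  refine ⟨⟨Set.nonempty_of_ncard_ne_zero (by omega), fun l hl hlπ => ?_, hγ⟩, fun l => ?_⟩
  · exact (hγl l).trans_le (hL.card_bipartiteBelow_le_two (mem_linesLE.2 ⟨hl, hlπ⟩))
  · rw [hγl]
    constructor
    · rintro ⟨hlS, hlπ⟩
      exact ⟨hS hlS, hlπ, (hL.mem_iff_card_bipartiteBelow_eq_two hm
        (mem_linesLE.2 ⟨hS hlS, hlπ⟩)).1 (mem_finsetLinesIn.2 ⟨hlS, hlπ⟩)⟩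
    · rintro ⟨hl, hlπ, h2⟩
      exact mem_finsetLinesIn.1
        ((hL.mem_iff_card_bipartiteBelow_eq_two hm (mem_linesLE.2 ⟨hl, hlπ⟩)).2 h2)

/-- For every secant plane `π`, the set `γ(π)` is an oval in `π`
(an arc of size `q+1`), and `S_π` is precisely the set of lines of `π` meeting
`γ(π)` in exactly two points. -/
theorem stmt_10 (K : Type) [Field K] [Fintype K] (q : ℕ) (hq : Fintype.card K = q)
    (hq_odd : Odd q) (S : Set (Submodule K (Fin 4 → K))) (hS : S ⊆ pgLine K)
    (h1 : P1 K S q) (h2 : P2 K S q) (h2a : P2a K S q) (h2b : P2b K S q) :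
    ∀ π, IsSecant K S q π →
      ((gammaSet K S q π).Nonempty ∧
        (∀ l ∈ pgLine K, l ≤ π →
          {p | p ∈ gammaSet K S q π ∧ p ≤ l}.ncard ≤ 2) ∧
        (gammaSet K S q π).ncard = q + 1) ∧
      (∀ l, (l ∈ S ∧ l ≤ π) ↔
        (l ∈ pgLine K ∧ l ≤ π ∧
          {p | p ∈ gammaSet K S q π ∧ p ≤ l}.ncard = 2)) :=
  stmt_10_general K q hq hq_odd S hS h2b
end
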